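/- arXiv:0710.4016 — 4 statements merged into one kernel-verified Lean document; each statement's English description precedes it below -/
import Mathlib

section
/- If f : X → X is a recurrent continuous map on a metric space X (i.e., there exists a sequence n_k → ∞ with sup_{x∈X} d(f^{n_k}(x), x) → 0), then for every positive integer m, the map f^m is also recurrent. -/
/-- A continuous map `f` on a metric space is *recurrent* if there is a sequence
`n k → ∞` with `sup_x d(f^[n k] x, x) → 0`, phrased via: for every `ε > 0`
eventually `d(f^[n k] x, x) < ε` for all `x`. -/
def IsRecurrentMap {X : Type*} [MetricSpace X] (f : X → X) : Prop :=
  ∃ n : ℕ → ℕ, Filter.Tendsto n Filter.atTop Filter.atTop ∧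
    ∀ ε > (0 : ℝ), ∃ K : ℕ, ∀ k ≥ K, ∀ x : X, dist (f^[n k] x) x < ε

theorem dist_iterate_mul_le {X : Type*} [PseudoMetricSpace X] {f : X → X} {n : ℕ} {δ : ℝ}
    (h : ∀ x, dist (f^[n] x) x ≤ δ) (j : ℕ) (x : X) :
    dist (f^[j * n] x) x ≤ j * δ := by
  induction j generalizing x with
  | zero => simp
  | succ j ih =>
    calc dist (f^[(j + 1) * n] x) x
        ≤ dist (f^[j * n] (f^[n] x)) (f^[n] x) + dist (f^[n] x) x := by
          rw [add_one_mul, Function.iterate_add_apply]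
          exact dist_triangle _ _ _
      _ ≤ j * δ + δ := add_le_add (ih _) (h x)
      _ = (j + 1 : ℕ) * δ := by push_cast; ring

theorem recurrent_iterate_general {X : Type*} [MetricSpace X] (f : X → X)
    (hrec : IsRecurrentMap f) (m : ℕ) :
    IsRecurrentMap (f^[m]) := by
  obtain ⟨n, hn, h⟩ := hrec
  refine ⟨n, hn, fun ε hε => ?_⟩
  -- dividing by `m + 1` rather than `m` keeps the case `m = 0` uniform
  obtain ⟨K, hK⟩ := h (ε / (m + 1)) (by positivity)
  refine ⟨K, fun k hk x => ?_⟩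
  calc dist ((f^[m])^[n k] x) x = dist (f^[m * n k] x) x := by rw [Function.iterate_mul]
    _ ≤ m * (ε / (m + 1)) := dist_iterate_mul_le (fun y => (hK k hk y).le) m x
    _ < ε := by
      rw [← mul_div_assoc, div_lt_iff₀ (by positivity)]
      linarith

theorem recurrent_iterate {X : Type*} [MetricSpace X] (f : X → X)
    (hf : Continuous f) (hrec : IsRecurrentMap f) (m : ℕ) (hm : 0 < m) :
    IsRecurrentMap (f^[m]) :=
  recurrent_iterate_general f hrec m
end

section
/- An equicontinuous flow Φ : X × ℝ → X on a compact metric space is uniformly almost periodic: for every ε > 0 there exists τ > 0 such that every interval I ⊆ ℝ of length τ contains a time t with d(Φ(t,x), x) < ε for all x ∈ X. -/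
/-!
By equicontinuity, uniform and pointwise convergence induce the same uniformity on the family
`(Φ t)`, and the family is totally bounded for the pointwise one because `X → X` is compact. So for
`δ > 0` finitely many times `s ∈ [-M, M]` suffice to make every `Φ r` uniformly `δ`-close to some
`Φ s`. Applying `Φ (-s)` and equicontinuity once more, `r - s` is an `ε`-almost period, and taking
`r` the midpoint of an interval of length `2M` puts `r - s` in that interval.
-/

open Set Filter Uniformity

theorem Equicontinuous.exists_finite_uniformly_close {ι X α : Type*} [TopologicalSpace X]
    [CompactSpace X] [UniformSpace α] [CompactSpace α] {F : ι → X → α}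
    (hF : Equicontinuous F) {U : Set (α × α)} (hU : U ∈ 𝓤 α) :
    ∃ t : Set ι, t.Finite ∧ ∀ i, ∃ j ∈ t, ∀ x, (F i x, F j x) ∈ U := by
  let _ : UniformSpace ι := (Pi.uniformSpace _).comap F
  have hpi : IsUniformInducing F := isUniformInducing_iff_uniformSpace.2 rfl
  have hunif : IsUniformInducing (UniformFun.ofFun ∘ F) :=
    hF.isUniformInducing_uniformFun_iff_pi.2 hpi
  have hbdd : TotallyBounded (univ : Set ι) :=
    totallyBounded_preimage hpi isCompact_univ.totallyBounded
  obtain ⟨t, ht, hcover⟩ := hbdd _ <| hunif.comap_uniformity ▸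
    preimage_mem_comap ((UniformFun.hasBasis_uniformity X α).mem_of_mem hU)
  refine ⟨t, ht, fun i => ?_⟩
  obtain ⟨j, hj, hij⟩ := mem_iUnion₂.1 (hcover (mem_univ i))
  exact ⟨j, hj, hij⟩

theorem dist_flow_sub_lt {X : Type*} [PseudoMetricSpace X] {Φ : ℝ → X → X}
    (hΦ0 : ∀ x, Φ 0 x = x) (hΦadd : ∀ s t x, Φ (s + t) x = Φ s (Φ t x)) {δ ε : ℝ}
    (hδ : ∀ x y, dist x y < δ → ∀ t, dist (Φ t x) (Φ t y) < ε) {r s : ℝ}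
    (hrs : ∀ x, dist (Φ r x) (Φ s x) < δ) (x : X) : dist (Φ (r - s) x) x < ε := by
  have := hδ _ _ (hrs x) (-s)
  rwa [← hΦadd, ← hΦadd, neg_add_cancel, hΦ0, neg_add_eq_sub] at this

theorem equicontinuous_flow_uniformly_almost_periodic_general
    {X : Type*} [MetricSpace X] [CompactSpace X]
    (Φ : ℝ → X → X)
    (hΦ0 : ∀ x, Φ 0 x = x)
    (hΦadd : ∀ s t x, Φ (s + t) x = Φ s (Φ t x))
    (hequi : ∀ ε > (0 : ℝ), ∃ δ > (0 : ℝ), ∀ x y : X, dist x y < δ →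
      ∀ t : ℝ, dist (Φ t x) (Φ t y) < ε) :
    ∀ ε > (0 : ℝ), ∃ τ > (0 : ℝ), ∀ a : ℝ, ∃ t ∈ Set.Icc a (a + τ),
      ∀ x : X, dist (Φ t x) x < ε := by
  intro ε hε
  obtain ⟨δ, hδ, hδε⟩ := hequi ε hε
  have hΦequi : Equicontinuous Φ :=
    (Metric.uniformEquicontinuous_iff.2 hequi).equicontinuous
  obtain ⟨T, hT, hTcover⟩ :=
    hΦequi.exists_finite_uniformly_close (Metric.dist_mem_uniformity hδ)
  obtain ⟨M, hM, hTM⟩ : ∃ M > 0, ∀ s ∈ T, |s| ≤ M := by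
    obtain ⟨M, hM⟩ := (hT.image abs).bddAbove
    exact ⟨max M 1, by positivity, fun s hs => (hM ⟨s, hs, rfl⟩).trans (le_max_left _ _)⟩
  refine ⟨2 * M, by positivity, fun a => ?_⟩
  obtain ⟨s, hs, hclose⟩ := hTcover (a + M)
  have hsM := abs_le.1 (hTM s hs)
  exact ⟨a + M - s, ⟨by linarith, by linarith⟩, dist_flow_sub_lt hΦ0 hΦadd hδε hclose⟩

/-- An equicontinuous flow on a compact metric space is uniformly almost periodic. -/
theorem equicontinuous_flow_uniformly_almost_periodic
    {X : Type*} [MetricSpace X] [CompactSpace X]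
    (Φ : ℝ → X → X)
    (hcont : Continuous fun p : ℝ × X => Φ p.1 p.2)
    (hΦ0 : ∀ x, Φ 0 x = x)
    (hΦadd : ∀ s t x, Φ (s + t) x = Φ s (Φ t x))
    (hequi : ∀ ε > (0 : ℝ), ∃ δ > (0 : ℝ), ∀ x y : X, dist x y < δ →
      ∀ t : ℝ, dist (Φ t x) (Φ t y) < ε) :
    ∀ ε > (0 : ℝ), ∃ τ > (0 : ℝ), ∀ a : ℝ, ∃ t ∈ Set.Icc a (a + τ),
      ∀ x : X, dist (Φ t x) x < ε :=
  equicontinuous_flow_uniformly_almost_periodic_general Φ hΦ0 hΦadd hequi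
end

section
/- Let X be a compact metric space and Φ an equicontinuous flow on X. Then for every ε > 0, the set of times {t ∈ ℝ : sup_{x∈X} d(Φ(t,x), x) < ε} is relatively dense in ℝ (syndetic): there exists τ > 0 such that this set intersects every interval of length τ. -/
/-- For an equicontinuous flow on a compact metric space and any `ε > 0`, the set
of `ε`-almost-periods `{t : ∀ x, d(Φ t x, x) < ε}` is relatively dense (syndetic). -/
theorem equicontinuous_flow_almost_periods_syndetic
    {X : Type*} [MetricSpace X] [CompactSpace X] (Φ : ℝ → X → X)
    (hcont : Continuous fun p : ℝ × X => Φ p.1 p.2)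
    (hΦ0 : ∀ x, Φ 0 x = x)
    (hΦadd : ∀ s t x, Φ (s + t) x = Φ s (Φ t x))
    (hequi : ∀ ε > (0 : ℝ), ∃ δ > (0 : ℝ), ∀ x y : X, dist x y < δ →
      ∀ t : ℝ, dist (Φ t x) (Φ t y) < ε) :
    ∀ ε > (0 : ℝ), ∃ τ > (0 : ℝ), ∀ a : ℝ,
      ∃ t ∈ Set.Icc a (a + τ), t ∈ {t : ℝ | ∀ x : X, dist (Φ t x) x < ε} := by
  intro ε hε
  rcases isEmpty_or_nonempty X with hX | hX
  · exact ⟨1, one_pos, fun a =>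
      ⟨a, ⟨le_refl a, by linarith⟩, fun x => (IsEmpty.false x).elim⟩⟩
  obtain ⟨δ, hδ, hδe⟩ := hequi (ε / 3) (by linarith)
  obtain ⟨C, -, hCfin, hCcov⟩ :=
    (isCompact_univ (X := X)).finite_cover_balls (e := δ) hδ
  haveI : Fintype C := hCfin.fintype
  set F : ℝ → (C → X) := fun r i => Φ r (i : X) with hF
  have htb : TotallyBounded (Set.range F) :=
    (isCompact_univ (X := C → X)).totallyBounded.subset (Set.subset_univ _)
  rw [Metric.totallyBounded_iff] at htb
  obtain ⟨c, hcfin, hccov⟩ := htb (ε / 6) (by linarith)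
  -- for each center pick a time whose image is close to it, if any
  classical
  set g : (C → X) → ℝ := fun y =>
    if h : ∃ s : ℝ, F s ∈ Metric.ball y (ε / 6) then h.choose else 0 with hg
  set T : Set ℝ := g '' c with hT
  have hTfin : T.Finite := hcfin.image g
  -- key approximation property
  have key : ∀ r : ℝ, ∃ s ∈ T, ∀ y : X, dist (Φ r y) (Φ s y) < ε := by
    intro r
    have hrmem : F r ∈ ⋃ y ∈ c, Metric.ball y (ε / 6) := hccov ⟨r, rfl⟩
    simp only [Set.mem_iUnion, exists_prop] at hrmem
    obtain ⟨y, hyc, hry⟩ := hrmem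
    have hex : ∃ s : ℝ, F s ∈ Metric.ball y (ε / 6) := ⟨r, hry⟩
    refine ⟨g y, ⟨y, hyc, rfl⟩, ?_⟩
    have hgy : F (g y) ∈ Metric.ball y (ε / 6) := by
      rw [hg]; simp only [hex, dif_pos]; exact hex.choose_spec
    have hFdist : dist (F r) (F (g y)) < ε / 3 := by
      have h1 := Metric.mem_ball.mp hry
      have h2 := Metric.mem_ball.mp hgy
      calc dist (F r) (F (g y)) ≤ dist (F r) y + dist y (F (g y)) := dist_triangle _ _ _
        _ < ε / 6 + ε / 6 := by
            have := dist_comm y (F (g y))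
            linarith [h1, h2, dist_comm y (F (g y)) ▸ h2]
        _ = ε / 3 := by ring
    intro z
    obtain ⟨x, hxC, hzx⟩ : ∃ x ∈ C, z ∈ Metric.ball x δ := by
      have := hCcov (Set.mem_univ z)
      simp only [Set.mem_iUnion, exists_prop] at this
      exact this
    have hzx' : dist z x < δ := Metric.mem_ball.mp hzx
    have hcoord : dist (Φ r x) (Φ (g y) x) < ε / 3 :=
      lt_of_le_of_lt (dist_le_pi_dist (F r) (F (g y)) ⟨x, hxC⟩) hFdist
    have h1 : dist (Φ r z) (Φ r x) < ε / 3 := hδe z x hzx' r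
    have h3 : dist (Φ (g y) x) (Φ (g y) z) < ε / 3 := by
      have := hδe x z (by rw [dist_comm]; exact hzx') (g y)
      exact this
    calc dist (Φ r z) (Φ (g y) z)
        ≤ dist (Φ r z) (Φ r x) + dist (Φ r x) (Φ (g y) x) + dist (Φ (g y) x) (Φ (g y) z) :=
          dist_triangle4 _ _ _ _
      _ < ε / 3 + ε / 3 + ε / 3 := by linarith
      _ = ε := by ring
  obtain ⟨s₀, hs₀T, -⟩ := key 0
  have hbdd : BddAbove (abs '' T) := (hTfin.image abs).bddAbove
  set M : ℝ := sSup (abs '' T) with hM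
  have hMle : ∀ s ∈ T, |s| ≤ M := fun s hs => le_csSup hbdd ⟨s, hs, rfl⟩
  have hM0 : 0 ≤ M := le_trans (abs_nonneg s₀) (hMle s₀ hs₀T)
  refine ⟨2 * M + 1, by linarith, fun a => ?_⟩
  obtain ⟨s, hsT, hs⟩ := key (a + M)
  have hsM := hMle s hsT
  have hs1 : s ≤ M := le_trans (le_abs_self s) hsM
  have hs2 : -M ≤ s := neg_le_of_abs_le hsM
  refine ⟨a + M - s, ⟨by linarith, by linarith⟩, ?_⟩
  intro x
  have h := hs (Φ (-s) x)
  have e1 : Φ (a + M) (Φ (-s) x) = Φ (a + M - s) x := by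
    rw [← hΦadd]; ring_nf
  have e2 : Φ s (Φ (-s) x) = x := by
    rw [← hΦadd]; simp [hΦ0]
  rw [e1, e2] at h
  exact h
end

section
/- Let Φ be an equicontinuous flow on a compact metric space X. Then every point of X is almost periodic: for every x and ε > 0, the set {t : d(Φ(t,x),x) < ε} is relatively dense in ℝ. -/
/-- For an equicontinuous flow on a compact metric space, every point is almost
periodic: the set of return times `{t : d(Φ t x, x) < ε}` is relatively dense. -/
theorem equicontinuous_flow_every_point_almost_periodic
    {X : Type*} [MetricSpace X] [CompactSpace X] (Φ : ℝ → X → X)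
    (hcont : Continuous fun p : ℝ × X => Φ p.1 p.2)
    (hΦ0 : ∀ x, Φ 0 x = x)
    (hΦadd : ∀ s t x, Φ (s + t) x = Φ s (Φ t x))
    (hequi : ∀ ε > (0 : ℝ), ∃ δ > (0 : ℝ), ∀ x y : X, dist x y < δ →
      ∀ t : ℝ, dist (Φ t x) (Φ t y) < ε) :
    ∀ x : X, ∀ ε > (0 : ℝ), ∃ τ > (0 : ℝ), ∀ a : ℝ,
      ∃ t ∈ Set.Icc a (a + τ), dist (Φ t x) x < ε := by
  intro x ε hε
  by_contra h
  push_neg at h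
  -- For each n, an interval of length 2(n+1) with no ε-returns
  have H : ∀ n : ℕ, ∃ a : ℝ, ∀ t ∈ Set.Icc a (a + (2 * (n + 1) : ℝ)),
      ε ≤ dist (Φ t x) x := fun n => h (2 * (n + 1)) (by positivity)
  choose a ha using H
  set b : ℕ → ℝ := fun n => a n + (n + 1) with hb
  set y : ℕ → X := fun n => Φ (b n) x with hy
  have key : ∀ n : ℕ, ∀ s : ℝ, |s| ≤ (n : ℝ) + 1 → ε ≤ dist (Φ s (y n)) x := by
    intro n s hs
    have habs := abs_le.1 hs
    have hmem : s + b n ∈ Set.Icc (a n) (a n + (2 * (n + 1) : ℝ)) := by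
      constructor <;> simp only [hb] <;> push_cast <;> [linarith [habs.1]; linarith [habs.2]]
    have := ha n (s + b n) hmem
    rwa [hΦadd s (b n) x] at this
  obtain ⟨z, -, φ, hφmono, hφtend⟩ :=
    isCompact_univ.tendsto_subseq (fun n => Set.mem_univ (y n))
  have hz : ∀ s : ℝ, ε ≤ dist (Φ s z) x := by
    intro s
    have cφs : Continuous fun w : X => Φ s w := hcont.comp (Continuous.prodMk_right s)
    have htend : Filter.Tendsto (fun k => dist (Φ s (y (φ k))) x) Filter.atTop
        (nhds (dist (Φ s z) x)) :=
      (((cφs.tendsto z).comp hφtend).dist tendsto_const_nhds)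
    refine ge_of_tendsto htend ?_
    refine Filter.eventually_atTop.2 ⟨⌈|s|⌉₊, fun k hk => ?_⟩
    refine key (φ k) s ?_
    have h1 : |s| ≤ (⌈|s|⌉₊ : ℝ) := Nat.le_ceil _
    have h2 : (⌈|s|⌉₊ : ℝ) ≤ (φ k : ℝ) := by
      exact_mod_cast le_trans hk (hφmono.le_apply)
    linarith
  obtain ⟨δ, hδ, hδ'⟩ := hequi ε hε
  obtain ⟨N, hN⟩ := (Metric.tendsto_atTop.1 hφtend) δ hδ
  have hclose : dist (Φ (b (φ N)) x) z < δ := hN N le_rfl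
  have := hδ' (Φ (b (φ N)) x) z hclose (-(b (φ N)))
  have hfix : Φ (-(b (φ N))) (Φ (b (φ N)) x) = x := by
    rw [← hΦadd, neg_add_cancel, hΦ0]
  rw [hfix] at this
  have := hz (-(b (φ N)))
  rw [dist_comm] at this
  linarith
end
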